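/- Let a ∈ R_n and let ℓ ≥ 1. Then wt(a^{2^ℓ − 1}) ≤ wt(a)^ℓ, where the power a^{2^ℓ − 1} is computed in R_n. -/

import Mathlib

open Polynomial

noncomputable section

/-- `R_n = F_2[x]/(x^n - 1)`. -/
abbrev Rq (n : ℕ) : Type :=
  Polynomial (ZMod 2) ⧸ Ideal.span ({X ^ n - 1} : Set (Polynomial (ZMod 2)))

/-- The canonical projection `F_2[x] → R_n`. -/
abbrev mkq (n : ℕ) : Polynomial (ZMod 2) →+* Rq n :=
  Ideal.Quotient.mk (Ideal.span ({X ^ n - 1} : Set (Polynomial (ZMod 2))))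

/-- The unique polynomial representative of degree `< n` of an element of `R_n`
(obtained by reducing any lift modulo the monic polynomial `x^n - 1`). -/
def rep (n : ℕ) (z : Rq n) : Polynomial (ZMod 2) :=
  Function.surjInv Ideal.Quotient.mk_surjective z %ₘ (X ^ n - 1)

/-- Hamming weight of an element of `R_n`: the number of nonzero coefficients of its
unique representative of degree `< n`. -/
def wtq (n : ℕ) (z : Rq n) : ℕ := (rep n z).support.card

/-! Lifting to `F_2[x]`, reduction modulo `x^n - 1` only merges monomials whose exponents agree
modulo `n`, so it never increases the number of terms. A product `f g` has at most
`wt(f) wt(g)` terms, and squaring does not increase the number of terms because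
`f(x)^2 = f(x^2)` in characteristic `2`. Since `a^(2^(ℓ+1) - 1) = (a^(2^ℓ - 1))^2 a`,
induction on `ℓ` gives the bound. -/

open Finset

namespace Polynomial

theorem card_support_sum_monomial_le {R ι : Type*} [Semiring R] (s : Finset ι) (e : ι → ℕ)
    (c : ι → R) :
    #(∑ i ∈ s, monomial (e i) (c i)).support ≤ #s := by
  classical
  have hsub : (∑ i ∈ s, monomial (e i) (c i)).support ⊆ s.image e := by
    intro j hj
    rw [mem_support_iff, finsetSum_coeff] at hj
    obtain ⟨i, hi, hne⟩ := exists_ne_zero_of_sum_ne_zero hj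
    rw [coeff_monomial] at hne
    exact mem_image.mpr ⟨i, hi, by_contra fun h => hne (if_neg h)⟩
  exact (card_le_card hsub).trans card_image_le

theorem card_support_expand_le {R : Type*} [CommSemiring R] (k : ℕ) (f : R[X]) :
    #(expand R k f).support ≤ #f.support := by
  conv_lhs => rw [f.as_sum_support, map_sum]
  simp only [expand_monomial]
  exact card_support_sum_monomial_le _ _ _

theorem card_support_pow_expChar_le {R : Type*} [CommSemiring R] (p : ℕ) [ExpChar R p]
    (f : R[X]) : #(f ^ p).support ≤ #f.support := by
  rw [← map_frobenius_expand]
  exact (card_le_card (support_map_subset _ _)).trans (card_support_expand_le p f)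

def wrapExponents {R : Type*} [Semiring R] (n : ℕ) (p : R[X]) : R[X] :=
  ∑ i ∈ p.support, monomial (i % n) (p.coeff i)

section CommRing

variable {R : Type*} [CommRing R]

theorem X_pow_sub_one_dvd_sub_wrapExponents (n : ℕ) (p : R[X]) :
    X ^ n - 1 ∣ p - wrapExponents n p := by
  have hsum : p - wrapExponents n p
      = ∑ i ∈ p.support, (monomial i (p.coeff i) - monomial (i % n) (p.coeff i)) := by
    rw [wrapExponents, sum_sub_distrib, ← as_sum_support]
  rw [hsum]
  refine dvd_sum fun i _ => ?_
  have h : monomial i (p.coeff i) - monomial (i % n) (p.coeff i)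
      = C (p.coeff i) * X ^ (i % n) * (X ^ (n * (i / n)) - 1) := by
    have hX : (X : R[X]) ^ i = X ^ (i % n) * X ^ (n * (i / n)) := by
      rw [← pow_add, Nat.mod_add_div]
    rw [← C_mul_X_pow_eq_monomial, ← C_mul_X_pow_eq_monomial, hX]
    ring
  rw [h]
  exact dvd_mul_of_dvd_right (pow_one_sub_dvd_pow_mul_sub_one X n _) _

theorem degree_wrapExponents_lt {n : ℕ} (hn : 0 < n) (p : R[X]) :
    (wrapExponents n p).degree < n := by
  refine lt_of_le_of_lt (degree_sum_le _ _) ?_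
  rw [Finset.sup_lt_iff (by exact_mod_cast WithBot.bot_lt_coe n)]
  exact fun i _ => (degree_monomial_le _ _).trans_lt (by exact_mod_cast Nat.mod_lt i hn)

theorem modByMonic_X_pow_sub_one_eq_wrapExponents [Nontrivial R] {n : ℕ} (hn : 0 < n)
    (p : R[X]) : p %ₘ (X ^ n - 1) = wrapExponents n p := by
  have hmonic : (X ^ n - 1 : R[X]).Monic := monic_X_pow_sub_C 1 hn.ne'
  rw [modByMonic_eq_of_dvd_sub hmonic (X_pow_sub_one_dvd_sub_wrapExponents n p),
    (modByMonic_eq_self_iff hmonic).mpr]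
  rw [show (X ^ n - 1 : R[X]).degree = n by simpa using degree_X_pow_sub_C hn (1 : R)]
  exact degree_wrapExponents_lt hn p

theorem card_support_modByMonic_X_pow_sub_one_le [Nontrivial R] {n : ℕ} (hn : 0 < n)
    (p : R[X]) :
    #(p %ₘ (X ^ n - 1)).support ≤ #p.support := by
  rw [modByMonic_X_pow_sub_one_eq_wrapExponents hn]
  exact card_support_sum_monomial_le _ _ _

end CommRing

end Polynomial

theorem mkq_rep (n : ℕ) (z : Rq n) : mkq n (rep n z) = z := by
  conv_rhs => rw [← Function.surjInv_eq (f := mkq n) Ideal.Quotient.mk_surjective z]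
  rw [Ideal.Quotient.eq, Ideal.mem_span_singleton]
  exact dvd_modByMonic_sub _ _

theorem rep_mkq {n : ℕ} (hn : 1 ≤ n) (p : (ZMod 2)[X]) :
    rep n (mkq n p) = p %ₘ (X ^ n - 1) := by
  apply modByMonic_eq_of_dvd_sub (monic_X_pow_sub_C 1 (by omega))
  rw [← Ideal.mem_span_singleton, ← Ideal.Quotient.eq]
  exact Function.surjInv_eq (f := mkq n) Ideal.Quotient.mk_surjective (mkq n p)

theorem wtq_mkq_le {n : ℕ} (hn : 1 ≤ n) (p : (ZMod 2)[X]) : wtq n (mkq n p) ≤ #p.support := by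
  rw [wtq, rep_mkq hn]
  exact card_support_modByMonic_X_pow_sub_one_le hn p

theorem wtq_mul_le {n : ℕ} (hn : 1 ≤ n) (z w : Rq n) : wtq n (z * w) ≤ wtq n z * wtq n w := by
  have h := wtq_mkq_le hn (rep n z * rep n w)
  rw [map_mul, mkq_rep, mkq_rep] at h
  exact h.trans card_support_mul_le

theorem wtq_sq_le {n : ℕ} (hn : 1 ≤ n) (z : Rq n) : wtq n (z ^ 2) ≤ wtq n z := by
  have h := wtq_mkq_le hn (rep n z ^ 2)
  rw [map_pow, mkq_rep] at h
  exact h.trans (card_support_pow_expChar_le 2 _)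

theorem stmt17_general (n : ℕ) (hn : 1 ≤ n) (ℓ : ℕ) (a : Rq n) :
    wtq n (a ^ (2 ^ ℓ - 1)) ≤ wtq n a ^ ℓ := by
  induction ℓ with
  | zero =>
    have h := wtq_mkq_le hn (C 1)
    rw [support_C one_ne_zero, card_singleton, C_1, map_one] at h
    simpa using h
  | succ ℓ ih =>
    have hpow : a ^ (2 ^ (ℓ + 1) - 1) = (a ^ (2 ^ ℓ - 1)) ^ 2 * a := by
      rw [← pow_mul, ← pow_succ]
      congr 1
      have := Nat.one_le_two_pow (n := ℓ)
      rw [pow_succ]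
      omega
    rw [hpow]
    calc wtq n ((a ^ (2 ^ ℓ - 1)) ^ 2 * a)
        ≤ wtq n ((a ^ (2 ^ ℓ - 1)) ^ 2) * wtq n a := wtq_mul_le hn _ _
      _ ≤ wtq n a ^ ℓ * wtq n a := Nat.mul_le_mul_right _ ((wtq_sq_le hn _).trans ih)
      _ = wtq n a ^ (ℓ + 1) := (pow_succ _ _).symm

/-- for `a ∈ R_n` and `ℓ ≥ 1`, `wt(a^{2^ℓ - 1}) ≤ wt(a)^ℓ`. -/
theorem stmt17 (n : ℕ) (hn : 1 ≤ n) (ℓ : ℕ) (hℓ : 1 ≤ ℓ) (a : Rq n) :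
    wtq n (a ^ (2 ^ ℓ - 1)) ≤ wtq n a ^ ℓ :=
  stmt17_general n hn ℓ a

end
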